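/- Let f be a pseudo-polynomial with leading exponent θ_d, N a sufficiently large positive integer, P the largest real solution of f(P) = N, 0 < v < min(θ_d − θ_{d−1}, 1/5) (θ_0 = 1 if d = 1), τ = P^{θ_d − v}, and let s be an integer with s > θ_d. Then ∫_{−τ^{−1}}^{τ^{−1}} V(α)^s e(−αN) dα = ∫_{−1/2}^{1/2} V(α)^s e(−αN) dα + O(P^{s − θ_d − δ₂}), where δ₂ = v(s/θ_d − 1) > 0. -/

import Mathlib

/-! Partial summation against the geometric sums `∑ e(αm)`, which are `≪ 1/|α|`, gives
`V(α) ≪ |α|^{-1/θ_d}` uniformly in `N` for `0 < |α| ≤ 1/2`; the terms with `m ≤ 1/|α|` are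
estimated trivially. The integrand is therefore `≪ |α|^{-s/θ_d}` with `s/θ_d > 1`, so its integral
over `τ⁻¹ ≤ |α| ≤ 1/2` is `≪ τ^{s/θ_d - 1} = P^{s - θ_d - v(s/θ_d - 1)}`. Finally `f(0) = 0` and
`f(x) → ∞`, so the largest root `P` of `f = N` is nonnegative, and it tends to infinity with `N`
because `f` is bounded on compact sets; hence `τ⁻¹ ≤ 1/2` for large `N`. -/

open Finset

noncomputable def e (x : ℝ) : ℂ := Complex.exp (2 * Real.pi * Complex.I * x)

/-- A pseudo-polynomial `f(x) = a_d x^{θ_d} + ⋯ + a_1 x^{θ_1}` with real coefficients,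
`a_d > 0`, real exponents `1 ≤ θ_1 < ⋯ < θ_d`, and at least one non-integral exponent. -/
structure PseudoPoly where
  d : ℕ
  d_pos : 1 ≤ d
  a : ℕ → ℝ
  θ : ℕ → ℝ
  a_pos : 0 < a d
  θ_one : 1 ≤ θ 1
  θ_mono : ∀ i, 1 ≤ i → i < d → θ i < θ (i + 1)
  nonint : ∃ i, 1 ≤ i ∧ i ≤ d ∧ ∀ n : ℤ, θ i ≠ (n : ℝ)

noncomputable def PseudoPoly.eval (f : PseudoPoly) (x : ℝ) : ℝ :=
  ∑ i ∈ Finset.Icc 1 f.d, f.a i * x ^ f.θ i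

/-- `θ_{d-1}`, with the convention `θ_0 = 1` if `d = 1`. -/
noncomputable def PseudoPoly.θprev (f : PseudoPoly) : ℝ :=
  if f.d = 1 then 1 else f.θ (f.d - 1)

/-- `P` is the largest real solution of `f(P) = N`. -/
def PseudoPoly.IsLargestRoot (f : PseudoPoly) (N : ℝ) (P : ℝ) : Prop :=
  f.eval P = N ∧ ∀ x : ℝ, f.eval x = N → x ≤ P

/-- `V(α) = (1/a_d)^{1/θ_d} (1/θ_d) Σ_{m=1}^{N} m^{1/θ_d − 1} e(αm)`. -/
noncomputable def V (f : PseudoPoly) (N : ℕ) (α : ℝ) : ℂ :=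
  (((1 / f.a f.d) ^ (1 / f.θ f.d) * (1 / f.θ f.d) : ℝ) : ℂ) *
    ∑ m ∈ Finset.Icc 1 N, (((m : ℝ) ^ (1 / f.θ f.d - 1) : ℝ) : ℂ) * e (α * m)

open Filter Topology MeasureTheory

theorem norm_e (x : ℝ) : ‖e x‖ = 1 := by
  rw [e, show 2 * Real.pi * Complex.I * x = ((2 * Real.pi * x : ℝ) : ℂ) * Complex.I by
    push_cast; ring]
  exact Complex.norm_exp_ofReal_mul_I _

theorem e_mul_natCast (α : ℝ) (m : ℕ) : e (α * m) = e α ^ m := by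
  rw [e, e, ← Complex.exp_nat_mul]
  push_cast
  ring_nf

theorem four_mul_abs_le_norm_e_sub_one {α : ℝ} (hα : |α| ≤ 1 / 2) : 4 * |α| ≤ ‖e α - 1‖ := by
  have hsin := Real.mul_abs_le_abs_sin (x := Real.pi * α) (by
    rw [abs_mul, abs_of_pos Real.pi_pos]; nlinarith [Real.pi_pos])
  rw [e, show 2 * Real.pi * Complex.I * α = Complex.I * ((2 * Real.pi * α : ℝ) : ℂ) by
    push_cast; ring, Complex.norm_exp_I_mul_ofReal_sub_one, norm_mul, Real.norm_eq_abs,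
    show 2 * Real.pi * α / 2 = Real.pi * α by ring, abs_mul, abs_of_pos Real.pi_pos] at *
  norm_num
  field_simp at hsin
  linarith

theorem norm_geom_sum_e_le {α : ℝ} (hα0 : 0 < |α|) (hα : |α| ≤ 1 / 2) (n : ℕ) :
    ‖∑ i ∈ range n, e α ^ i‖ ≤ 1 / (2 * |α|) := by
  have hlow := four_mul_abs_le_norm_e_sub_one hα
  have hne : e α ≠ 1 := fun h => by rw [h, sub_self, norm_zero] at hlow; linarith
  have hnum : ‖e α ^ n - 1‖ ≤ 2 := by
    calc ‖e α ^ n - 1‖ ≤ ‖e α ^ n‖ + ‖(1 : ℂ)‖ := norm_sub_le _ _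
      _ = 2 := by rw [norm_pow, norm_e]; norm_num
  rw [geom_sum_eq hne, norm_div, div_le_div_iff₀ (by linarith) (by positivity)]
  nlinarith

theorem norm_sum_Ico_smul_le_of_antitoneOn {E : Type*} [SeminormedAddCommGroup E]
    [NormedSpace ℝ E] {f : ℕ → ℝ} {g : ℕ → E} {m n : ℕ} {B : ℝ}
    (hf : AntitoneOn f (Set.Ici m)) (hf0 : ∀ i, 0 ≤ f i)
    (hg : ∀ k, ‖∑ i ∈ range k, g i‖ ≤ B) :
    ‖∑ i ∈ Ico m n, f i • g i‖ ≤ 2 * B * f m := by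
  have hB : 0 ≤ B := by simpa using hg 0
  rcases le_or_gt n m with hnm | hmn
  · rw [Finset.Ico_eq_empty_of_le hnm, Finset.sum_empty, norm_zero]
    exact mul_nonneg (by positivity) (hf0 m)
  have hdiff : ∀ i ∈ Ico m (n - 1),
      ‖(f (i + 1) - f i) • ∑ j ∈ range (i + 1), g j‖ ≤ -(f (i + 1) - f i) * B := by
    intro i hi
    have hmi : m ≤ i := (Finset.mem_Ico.1 hi).1
    have hle : f (i + 1) ≤ f i := hf hmi (hmi.trans i.le_succ) i.le_succ
    rw [norm_smul, Real.norm_eq_abs, abs_of_nonpos (by linarith)]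
    exact mul_le_mul_of_nonneg_left (hg _) (by linarith)
  have htel : ∑ i ∈ Ico m (n - 1), -(f (i + 1) - f i) * B = (f m - f (n - 1)) * B := by
    rw [← Finset.sum_mul, Finset.sum_neg_distrib, Finset.sum_Ico_sub (f := f) (by omega)]
    ring
  rw [Finset.sum_Ico_by_parts f g hmn]
  calc _ ≤ ‖f (n - 1) • ∑ i ∈ range n, g i‖ + ‖f m • ∑ i ∈ range m, g i‖
        + ‖∑ i ∈ Ico m (n - 1), (f (i + 1) - f i) • ∑ j ∈ range (i + 1), g j‖ :=
        norm_sub_le_of_le (norm_sub_le _ _) le_rfl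
    _ ≤ f (n - 1) * B + f m * B + (f m - f (n - 1)) * B := by
        rw [norm_smul, norm_smul, Real.norm_of_nonneg (hf0 _), Real.norm_of_nonneg (hf0 _)]
        exact add_le_add (add_le_add (mul_le_mul_of_nonneg_left (hg n) (hf0 _))
          (mul_le_mul_of_nonneg_left (hg m) (hf0 _)))
          ((norm_sum_le _ _).trans ((Finset.sum_le_sum hdiff).trans_eq htel))
    _ = 2 * B * f m := by ring

theorem mul_add_one_rpow_sub_one_le {σ x : ℝ} (hσ0 : 0 ≤ σ) (hσ1 : σ ≤ 1) (hx : 0 ≤ x) :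
    σ * (x + 1) ^ (σ - 1) ≤ (x + 1) ^ σ - x ^ σ := by
  have hx1 : 0 < x + 1 := by linarith
  have hinv : (x + 1)⁻¹ ≤ 1 := inv_le_one_of_one_le₀ (by linarith)
  have hbern := rpow_one_add_le_one_add_mul_self (neg_le_neg hinv) hσ0 hσ1
  have hsplit : x ^ σ = (x + 1) ^ σ * (1 + -(x + 1)⁻¹) ^ σ := by
    rw [← Real.mul_rpow hx1.le (by linarith)]
    congr 1
    field_simp
    ring
  have hpow : (x + 1) ^ (σ - 1) = (x + 1) ^ σ * (x + 1)⁻¹ := by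
    rw [Real.rpow_sub_one hx1.ne', div_eq_mul_inv]
  rw [hsplit, hpow]
  nlinarith [Real.rpow_nonneg hx1.le σ]

theorem sum_Icc_rpow_sub_one_le {σ : ℝ} (hσ0 : 0 < σ) (hσ1 : σ ≤ 1) (X : ℕ) :
    ∑ m ∈ Icc 1 X, (m : ℝ) ^ (σ - 1) ≤ (X : ℝ) ^ σ / σ := by
  induction X with
  | zero => simp [Real.zero_rpow hσ0.ne']
  | succ X ih =>
    rw [Finset.sum_Icc_succ_top (by omega), le_div_iff₀ hσ0, add_mul]
    have := mul_add_one_rpow_sub_one_le hσ0.le hσ1 (Nat.cast_nonneg X)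
    rw [le_div_iff₀ hσ0] at ih
    push_cast
    linarith

theorem norm_sum_rpow_mul_e_le {σ α : ℝ} (hσ0 : 0 < σ) (hσ1 : σ ≤ 1) (hα0 : 0 < |α|)
    (hα : |α| ≤ 1 / 2) (N : ℕ) :
    ‖∑ m ∈ Icc 1 N, (((m : ℝ) ^ (σ - 1) : ℝ) : ℂ) * e (α * m)‖ ≤
      (1 / σ + 1) * |α| ^ (-σ) := by
  set X := ⌊|α|⁻¹⌋₊
  have hX : (X : ℝ) ≤ |α|⁻¹ := Nat.floor_le (by positivity)
  have hX1 : |α|⁻¹ ≤ (X + 1 : ℕ) := by push_cast; exact (Nat.lt_floor_add_one _).le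
  have hterm (m : ℕ) : ‖(((m : ℝ) ^ (σ - 1) : ℝ) : ℂ) * e (α * m)‖ = (m : ℝ) ^ (σ - 1) := by
    rw [norm_mul, norm_e, mul_one, Complex.norm_real, Real.norm_of_nonneg (by positivity)]
  have hhead : ‖∑ m ∈ (Icc 1 N).filter (· ≤ X),
      (((m : ℝ) ^ (σ - 1) : ℝ) : ℂ) * e (α * m)‖ ≤ 1 / σ * |α| ^ (-σ) := by
    calc _ ≤ ∑ m ∈ (Icc 1 N).filter (· ≤ X), (m : ℝ) ^ (σ - 1) :=
          (norm_sum_le _ _).trans_eq (Finset.sum_congr rfl fun m _ => hterm m)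
      _ ≤ ∑ m ∈ Icc 1 X, (m : ℝ) ^ (σ - 1) :=
          Finset.sum_le_sum_of_subset_of_nonneg
            (fun m hm => by simp only [Finset.mem_filter, Finset.mem_Icc] at hm ⊢; omega)
            (fun m _ _ => by positivity)
      _ ≤ (X : ℝ) ^ σ / σ := sum_Icc_rpow_sub_one_le hσ0 hσ1 X
      _ ≤ 1 / σ * |α| ^ (-σ) := by
          rw [mul_comm, ← div_eq_mul_one_div, Real.rpow_neg hα0.le, ← Real.inv_rpow hα0.le]
          gcongr
  have htail : ‖∑ m ∈ (Icc 1 N).filter (fun m => ¬ m ≤ X),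
      (((m : ℝ) ^ (σ - 1) : ℝ) : ℂ) * e (α * m)‖ ≤ |α| ^ (-σ) := by
    have hIco : (Icc 1 N).filter (fun m => ¬ m ≤ X) = Ico (X + 1) (N + 1) := by
      ext m
      simp only [Finset.mem_filter, Finset.mem_Icc, Finset.mem_Ico]
      omega
    have hanti : AntitoneOn (fun m : ℕ => (m : ℝ) ^ (σ - 1)) (Set.Ici (X + 1)) :=
      fun i hi _ _ hij => Real.rpow_le_rpow_of_nonpos
        (Nat.cast_pos.2 (X.succ_pos.trans_le hi)) (by exact_mod_cast hij) (by linarith)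
    have hpartial (k : ℕ) : ‖∑ i ∈ range k, e (α * i)‖ ≤ 1 / (2 * |α|) := by
      simpa only [e_mul_natCast] using norm_geom_sum_e_le hα0 hα k
    simp_rw [hIco, ← Complex.real_smul]
    calc _ ≤ 2 * (1 / (2 * |α|)) * ((X + 1 : ℕ) : ℝ) ^ (σ - 1) :=
          norm_sum_Ico_smul_le_of_antitoneOn hanti (fun m => by positivity) hpartial
      _ ≤ |α|⁻¹ * |α|⁻¹ ^ (σ - 1) := by
          rw [show 2 * (1 / (2 * |α|)) = |α|⁻¹ by field_simp]
          exact mul_le_mul_of_nonneg_left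
            (Real.rpow_le_rpow_of_nonpos (inv_pos.2 hα0) hX1 (by linarith)) (by positivity)
      _ = |α| ^ (-σ) := by
          rw [Real.rpow_neg hα0.le, ← Real.inv_rpow hα0.le,
            ← Real.rpow_one_add' (inv_nonneg.2 hα0.le) (by ring_nf; exact hσ0.ne')]
          ring_nf
  rw [← Finset.sum_filter_add_sum_filter_not _ (· ≤ X)]
  calc _ ≤ _ := norm_add_le _ _
    _ ≤ 1 / σ * |α| ^ (-σ) + |α| ^ (-σ) := add_le_add hhead htail
    _ = (1 / σ + 1) * |α| ^ (-σ) := by ring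

namespace PseudoPoly

variable (f : PseudoPoly)

theorem strictMonoOn_θ : StrictMonoOn f.θ (Set.Icc 1 f.d) :=
  strictMonoOn_of_lt_add_one Set.ordConnected_Icc fun i _ hi hi1 => f.θ_mono i hi.1 hi1.2

theorem one_le_θ {i : ℕ} (hi : 1 ≤ i) (hid : i ≤ f.d) : 1 ≤ f.θ i :=
  f.θ_one.trans (f.strictMonoOn_θ.monotoneOn ⟨le_rfl, f.d_pos⟩ ⟨hi, hid⟩ hi)

theorem θ_pos {i : ℕ} (hi : i ∈ Icc 1 f.d) : 0 < f.θ i :=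
  zero_lt_one.trans_le (f.one_le_θ (Finset.mem_Icc.1 hi).1 (Finset.mem_Icc.1 hi).2)

theorem continuous_eval : Continuous f.eval :=
  continuous_finsetSum _ fun _ hi =>
    continuous_const.mul (Real.continuous_rpow_const (f.θ_pos hi).le)

theorem eval_zero : f.eval 0 = 0 :=
  Finset.sum_eq_zero fun _ hi => by rw [Real.zero_rpow (f.θ_pos hi).ne', mul_zero]

theorem tendsto_eval_atTop : Tendsto f.eval atTop atTop := by
  have hlower : Tendsto (fun x : ℝ => ∑ i ∈ Ico 1 f.d, f.a i * x ^ (-(f.θ f.d - f.θ i)))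
      atTop (𝓝 0) := by
    simpa using tendsto_finsetSum _ fun i hi => (tendsto_rpow_neg_atTop
      (sub_pos.2 (f.strictMonoOn_θ ⟨(Finset.mem_Ico.1 hi).1, (Finset.mem_Ico.1 hi).2.le⟩
        ⟨f.d_pos, le_rfl⟩ (Finset.mem_Ico.1 hi).2))).const_mul (f.a i)
  have hfactor : ∀ᶠ x in atTop, x ^ f.θ f.d *
      (f.a f.d + ∑ i ∈ Ico 1 f.d, f.a i * x ^ (-(f.θ f.d - f.θ i))) = f.eval x := by
    filter_upwards [eventually_gt_atTop 0] with x hx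
    rw [eval, ← Finset.Ico_insert_right f.d_pos, Finset.sum_insert (by simp), mul_add,
      Finset.mul_sum, mul_comm]
    congr 1
    refine Finset.sum_congr rfl fun i _ => ?_
    rw [mul_left_comm, ← Real.rpow_add hx]
    ring_nf
  exact ((tendsto_rpow_atTop (by linarith [f.one_le_θ f.d_pos le_rfl])).atTop_mul_pos f.a_pos
    (by simpa using hlower.const_add (f.a f.d))).congr' hfactor

theorem exists_nonneg_eval_eq {y : ℝ} (hy : 0 ≤ y) : ∃ x, 0 ≤ x ∧ f.eval x = y := by
  obtain ⟨x, hx, hfx⟩ := intermediate_value_Ici f.continuous_eval.continuousOn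
    f.tendsto_eval_atTop (show y ∈ Set.Ici (f.eval 0) by rwa [eval_zero])
  exact ⟨x, hx, hfx⟩

theorem exists_lt_of_isLargestRoot (R : ℝ) :
    ∃ N₀ : ℕ, ∀ N : ℕ, N₀ ≤ N → ∀ P : ℝ, f.IsLargestRoot N P → R < P := by
  obtain ⟨B, hB⟩ := isCompact_Icc.bddAbove_image (f.continuous_eval.continuousOn (s := Set.Icc 0 R))
  refine ⟨⌊B⌋₊ + 1, fun N hN P hP => ?_⟩
  obtain ⟨x, hx0, hx⟩ := f.exists_nonneg_eval_eq (Nat.cast_nonneg N)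
  by_contra! hPR
  have hNB : (N : ℝ) ≤ B := hP.1 ▸ hB ⟨P, ⟨hx0.trans (hP.2 x hx), hPR⟩, rfl⟩
  have hN' : (⌊B⌋₊ + 1 : ℝ) ≤ N := by exact_mod_cast hN
  linarith [Nat.lt_floor_add_one B]

end PseudoPoly

theorem norm_V_le (f : PseudoPoly) (N : ℕ) {α : ℝ} (hα0 : 0 < |α|) (hα : |α| ≤ 1 / 2) :
    ‖V f N α‖ ≤ (1 / f.a f.d) ^ (1 / f.θ f.d) * (1 / f.θ f.d) * (f.θ f.d + 1) *
      |α| ^ (-(1 / f.θ f.d)) := by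
  have hθ := f.one_le_θ f.d_pos le_rfl
  have hcoef : 0 ≤ (1 / f.a f.d) ^ (1 / f.θ f.d) * (1 / f.θ f.d) := by
    have := f.a_pos
    positivity
  have hsum := norm_sum_rpow_mul_e_le (σ := 1 / f.θ f.d) (by positivity)
    (div_le_one_of_le₀ hθ (by linarith)) hα0 hα N
  rw [one_div_one_div] at hsum
  rw [V, norm_mul, Complex.norm_real, Real.norm_of_nonneg hcoef, mul_assoc _ (f.θ f.d + 1)]
  exact mul_le_mul_of_nonneg_left hsum hcoef

section Integrals

variable {E : Type*} [NormedAddCommGroup E] [NormedSpace ℝ E]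

theorem norm_integral_le_of_norm_le_rpow_neg {g : ℝ → E} {K ρ t b : ℝ} (hK : 0 ≤ K) (ht : 0 < t)
    (htb : t ≤ b) (hρ : 1 < ρ) (hg : ∀ α ∈ Set.Ioc t b, ‖g α‖ ≤ K * α ^ (-ρ)) :
    ‖∫ α in t..b, g α‖ ≤ K / (ρ - 1) * t ^ (1 - ρ) := by
  have h0 : (0 : ℝ) ∉ Set.uIcc t b := by
    rw [Set.uIcc_of_le htb]
    exact fun h => by linarith [h.1]
  calc _ ≤ ∫ α in t..b, K * α ^ (-ρ) :=
        intervalIntegral.norm_integral_le_of_norm_le htb (Eventually.of_forall hg)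
          ((intervalIntegral.intervalIntegrable_rpow (Or.inr h0)).const_mul K)
    _ = K / (ρ - 1) * (t ^ (1 - ρ) - b ^ (1 - ρ)) := by
        rw [intervalIntegral.integral_const_mul, integral_rpow (Or.inr ⟨by linarith, h0⟩),
          ← neg_div_neg_eq, neg_sub, neg_add', neg_neg, neg_add_eq_sub]
        ring
    _ ≤ K / (ρ - 1) * t ^ (1 - ρ) := by
        have : 0 ≤ K / (ρ - 1) := div_nonneg hK (by linarith)
        gcongr
        linarith [Real.rpow_nonneg (ht.le.trans htb) (1 - ρ)]

theorem norm_integral_sub_integral_le_of_norm_le_rpow_neg {g : ℝ → E} {K ρ t b : ℝ}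
    (hK : 0 ≤ K) (ht : 0 < t) (htb : t ≤ b) (hρ : 1 < ρ)
    (hgi : IntervalIntegrable g volume (-b) b)
    (hg : ∀ α, t ≤ |α| → |α| ≤ b → ‖g α‖ ≤ K * |α| ^ (-ρ)) :
    ‖(∫ α in -t..t, g α) - ∫ α in -b..b, g α‖ ≤ 2 * K / (ρ - 1) * t ^ (1 - ρ) := by
  have hsub : ∀ {c d}, c ∈ Set.Icc (-b) b → d ∈ Set.Icc (-b) b →
      IntervalIntegrable g volume c d := fun hc hd => by
    rw [← Set.uIcc_of_le (by linarith)] at hc hd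
    exact hgi.mono_set (Set.uIcc_subset_uIcc hc hd)
  have hright := norm_integral_le_of_norm_le_rpow_neg hK ht htb hρ fun α ⟨htα, hαb⟩ => by
    have hα := abs_of_pos (ht.trans htα)
    simpa only [hα] using hg α (by rw [hα]; exact htα.le) (by rw [hα]; exact hαb)
  have hleft := norm_integral_le_of_norm_le_rpow_neg (g := fun α => g (-α)) hK ht htb hρ
    fun α ⟨htα, hαb⟩ => by
      have hα : |-α| = α := by rw [abs_neg, abs_of_pos (ht.trans htα)]
      simpa only [hα] using hg (-α) (by rw [hα]; exact htα.le) (by rw [hα]; exact hαb)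
  rw [intervalIntegral.integral_comp_neg] at hleft
  rw [intervalIntegral.integral_interval_sub_interval_comm
    (hsub ⟨by linarith, by linarith⟩ ⟨by linarith, by linarith⟩) hgi
    (hsub ⟨by linarith, by linarith⟩ ⟨le_rfl, by linarith⟩), intervalIntegral.integral_symm]
  calc _ ≤ ‖∫ α in -b..-t, g α‖ + ‖∫ α in t..b, g α‖ := norm_sub_le_of_le (norm_neg _).le le_rfl
    _ ≤ K / (ρ - 1) * t ^ (1 - ρ) + K / (ρ - 1) * t ^ (1 - ρ) := add_le_add hleft hright
    _ = 2 * K / (ρ - 1) * t ^ (1 - ρ) := by ring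

end Integrals

theorem norm_V_pow_mul_e_le (f : PseudoPoly) (N s : ℕ) {α : ℝ} (hα0 : 0 < |α|)
    (hα : |α| ≤ 1 / 2) (β : ℝ) :
    ‖V f N α ^ s * e β‖ ≤
      ((1 / f.a f.d) ^ (1 / f.θ f.d) * (1 / f.θ f.d) * (f.θ f.d + 1)) ^ s *
        |α| ^ (-(s / f.θ f.d)) := by
  rw [norm_mul, norm_e, mul_one, norm_pow, show -(s / f.θ f.d) = -(1 / f.θ f.d) * s by ring,
    Real.rpow_mul hα0.le, Real.rpow_natCast, ← mul_pow]
  exact pow_le_pow_left₀ (norm_nonneg _) (norm_V_le f N hα0 hα) s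

theorem truncated_vs_full_singularIntegral_general (f : PseudoPoly) (v : ℝ)
    (hv' : v < min (f.θ f.d - f.θprev) (1 / 5)) (s : ℕ) (hs : f.θ f.d < (s : ℝ)) :
    ∃ C > (0 : ℝ), ∃ N₀ : ℕ, ∀ N : ℕ, N₀ ≤ N → ∀ P : ℝ, f.IsLargestRoot N P →
      ‖((∫ α in (-(P ^ (f.θ f.d - v))⁻¹)..(P ^ (f.θ f.d - v))⁻¹,
              V f N α ^ s * e (-α * N)) -
            ∫ α in (-(1 / 2 : ℝ))..(1 / 2 : ℝ), V f N α ^ s * e (-α * N))‖ ≤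
        C * P ^ ((s : ℝ) - f.θ f.d - v * ((s : ℝ) / f.θ f.d - 1)) := by
  have hθ : 1 ≤ f.θ f.d := f.one_le_θ f.d_pos le_rfl
  have hθv : 0 < f.θ f.d - v := by linarith [hv'.trans_le (min_le_right _ _)]
  have hρ : 1 < (s : ℝ) / f.θ f.d := by rwa [one_lt_div (by linarith)]
  set K := (1 / f.a f.d) ^ (1 / f.θ f.d) * (1 / f.θ f.d) * (f.θ f.d + 1)
  have hK : 0 < K := by have := f.a_pos; positivity
  refine ⟨2 * K ^ s / ((s : ℝ) / f.θ f.d - 1), div_pos (by positivity) (by linarith), ?_⟩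
  obtain ⟨N₀, hN₀⟩ := f.exists_lt_of_isLargestRoot (2 ^ (f.θ f.d - v)⁻¹)
  refine ⟨N₀, fun N hN P hP => ?_⟩
  have hP0 : 0 < P := lt_trans (by positivity) (hN₀ N hN P hP)
  have hτ : 2 ≤ P ^ (f.θ f.d - v) := by
    simpa [Real.rpow_inv_rpow zero_le_two hθv.ne'] using
      Real.rpow_le_rpow (by positivity) (hN₀ N hN P hP).le hθv.le
  have ht : 0 < (P ^ (f.θ f.d - v))⁻¹ := by positivity
  have hexp : (P ^ (f.θ f.d - v))⁻¹ ^ (1 - (s : ℝ) / f.θ f.d) =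
      P ^ ((s : ℝ) - f.θ f.d - v * ((s : ℝ) / f.θ f.d - 1)) := by
    rw [← Real.rpow_neg hP0.le, ← Real.rpow_mul hP0.le]
    congr 1
    field_simp
    ring
  have hg : Continuous fun α : ℝ => V f N α ^ s * e (-α * N) := by
    unfold V e
    fun_prop
  rw [← hexp]
  exact norm_integral_sub_integral_le_of_norm_le_rpow_neg (pow_nonneg hK.le s) ht
    (by rw [one_div]; exact inv_anti₀ two_pos hτ) hρ (hg.intervalIntegrable _ _)
    fun α htα hα => norm_V_pow_mul_e_le f N s (ht.trans_le htα) hα _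

/-- For `s > θ_d`, `∫_{−τ⁻¹}^{τ⁻¹} V^s e(−αN) = ∫_{−1/2}^{1/2} V^s e(−αN) + O(P^{s−θ_d−δ₂})`
with `δ₂ = v(s/θ_d − 1) > 0` and `τ = P^{θ_d − v}`. -/
theorem truncated_vs_full_singularIntegral (f : PseudoPoly) (v : ℝ) (hv : 0 < v)
    (hv' : v < min (f.θ f.d - f.θprev) (1 / 5)) (s : ℕ) (hs : f.θ f.d < (s : ℝ)) :
    ∃ C > (0 : ℝ), ∃ N₀ : ℕ, ∀ N : ℕ, N₀ ≤ N → ∀ P : ℝ, f.IsLargestRoot N P →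
      ‖((∫ α in (-(P ^ (f.θ f.d - v))⁻¹)..(P ^ (f.θ f.d - v))⁻¹,
              V f N α ^ s * e (-α * N)) -
            ∫ α in (-(1 / 2 : ℝ))..(1 / 2 : ℝ), V f N α ^ s * e (-α * N))‖ ≤
        C * P ^ ((s : ℝ) - f.θ f.d - v * ((s : ℝ) / f.θ f.d - 1)) :=
  truncated_vs_full_singularIntegral_general f v hv' s hs
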